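/- In the setting of the inexact LM model decrease lemma: with A ∈ ℝ^{m×n}, ‖A‖ ≤ L₀, μ > 0, H = A Aᵀ + μ I, g = A b, d with residual r = H d + g and ‖r‖ ≤ τ μ ‖d‖ for τ ∈ (0,1/2), and q(d) = (1/2)‖Aᵀ d + b‖², one has q(0) − q(d) ≥ ‖r − g‖² / (2 (L₀² + μ)). -/

import Mathlib

/-!
Write `H = A A† + μ I` and `s = A† d`, so that `⟪H d, d⟫ = ‖s‖² + μ ‖d‖²`. Expanding the square,
`q 0 - q d = ⟪H d, d⟫ - ⟪r, d⟫ - ‖s‖² / 2 = ⟪H d, d⟫ / 2 + (μ ‖d‖² / 2 - ⟪r, d⟫)`, and the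
bracket is nonnegative because `⟪r, d⟫ ≤ τ μ ‖d‖²` with `τ < 1 / 2`. On the other hand
`‖H d‖ ≤ L₀ ‖s‖ + μ ‖d‖`, and Cauchy–Schwarz for the weights `(L₀, √μ)` gives
`‖H d‖² ≤ (L₀² + μ) ⟪H d, d⟫`. Since `r - g = H d`, the two bounds combine to the claim.
-/

open ContinuousLinearMap

open scoped InnerProductSpace

theorem real_inner_le_of_norm_le_mul_norm {F : Type*} [NormedAddCommGroup F]
    [InnerProductSpace ℝ F] {r d : F} {c : ℝ} (h : ‖r‖ ≤ c * ‖d‖) :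
    ⟪r, d⟫_ℝ ≤ c * ‖d‖ ^ 2 :=
  calc ⟪r, d⟫_ℝ ≤ ‖r‖ * ‖d‖ := real_inner_le_norm r d
    _ ≤ c * ‖d‖ * ‖d‖ := mul_le_mul_of_nonneg_right h (norm_nonneg d)
    _ = c * ‖d‖ ^ 2 := by ring

section RegularizedGram

variable {E F : Type*} [NormedAddCommGroup E] [InnerProductSpace ℝ E] [CompleteSpace E]
  [NormedAddCommGroup F] [InnerProductSpace ℝ F] [CompleteSpace F]

noncomputable def regularizedGram (A : E →L[ℝ] F) (μ : ℝ) : F →L[ℝ] F :=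
  A ∘L adjoint A + μ • ContinuousLinearMap.id ℝ F

variable (A : E →L[ℝ] F) (μ : ℝ) (d : F)

theorem regularizedGram_apply : regularizedGram A μ d = A (adjoint A d) + μ • d := rfl

theorem inner_regularizedGram_apply_self :
    ⟪regularizedGram A μ d, d⟫_ℝ = ‖adjoint A d‖ ^ 2 + μ * ‖d‖ ^ 2 := by
  rw [regularizedGram_apply, inner_add_left, ← adjoint_inner_right, real_inner_self_eq_norm_sq,
    real_inner_smul_left, real_inner_self_eq_norm_sq]

variable {A μ} {L : ℝ}

theorem norm_regularizedGram_apply_le (hA : ‖A‖ ≤ L) (hμ : 0 ≤ μ) :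
    ‖regularizedGram A μ d‖ ≤ L * ‖adjoint A d‖ + μ * ‖d‖ := by
  rw [regularizedGram_apply]
  calc ‖A (adjoint A d) + μ • d‖ ≤ ‖A (adjoint A d)‖ + ‖μ • d‖ := norm_add_le _ _
    _ ≤ L * ‖adjoint A d‖ + μ * ‖d‖ := by
      rw [norm_smul, Real.norm_of_nonneg hμ]
      gcongr
      exact A.le_of_opNorm_le hA _

theorem sq_norm_regularizedGram_apply_le (hA : ‖A‖ ≤ L) (hμ : 0 ≤ μ) :
    ‖regularizedGram A μ d‖ ^ 2 ≤ (L ^ 2 + μ) * ⟪regularizedGram A μ d, d⟫_ℝ := by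
  have hnorm := norm_regularizedGram_apply_le d hA hμ
  rw [inner_regularizedGram_apply_self]
  calc ‖regularizedGram A μ d‖ ^ 2 ≤ (L * ‖adjoint A d‖ + μ * ‖d‖) ^ 2 := by gcongr
    _ ≤ (L ^ 2 + μ) * (‖adjoint A d‖ ^ 2 + μ * ‖d‖ ^ 2) := by
      nlinarith [mul_nonneg hμ (sq_nonneg (L * ‖d‖ - ‖adjoint A d‖))]

theorem inner_regularizedGram_le_model_decrease (b : E)
    (hres : ⟪regularizedGram A μ d + A b, d⟫_ℝ ≤ μ / 2 * ‖d‖ ^ 2) :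
    ⟪regularizedGram A μ d, d⟫_ℝ ≤ ‖b‖ ^ 2 - ‖adjoint A d + b‖ ^ 2 := by
  have hcross : ⟪adjoint A d, b⟫_ℝ = ⟪A b, d⟫_ℝ := by
    rw [adjoint_inner_left, real_inner_comm]
  rw [inner_add_left, inner_regularizedGram_apply_self] at hres
  rw [inner_regularizedGram_apply_self, norm_add_sq_real, hcross]
  linarith

end RegularizedGram

/-- Model decrease lower bound for the inexact LM step: with `H = A Aᵀ + μ I`,
`g = A b`, residual `r = H d + g` with `‖r‖ ≤ τ μ ‖d‖` for `τ ∈ (0,1/2)`, and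
`q(d) = (1/2)‖Aᵀ d + b‖²`, with `‖A‖ ≤ L₀`, one has `q(0) − q(d) ≥ ‖r − g‖²/(2(L₀² + μ))`. -/
theorem model_decrease_residual_lower (m n : ℕ)
    (A : EuclideanSpace ℝ (Fin n) →L[ℝ] EuclideanSpace ℝ (Fin m))
    (b : EuclideanSpace ℝ (Fin n)) (μ τ : ℝ)
    (L₀ : ℝ) (hA : ‖A‖ ≤ L₀) (hμ : 0 < μ) (hτ : τ ∈ Set.Ioo (0 : ℝ) (1 / 2))
    (H : EuclideanSpace ℝ (Fin m) →L[ℝ] EuclideanSpace ℝ (Fin m))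
    (hH : H = A.comp (ContinuousLinearMap.adjoint A) + μ • ContinuousLinearMap.id ℝ _)
    (g d r : EuclideanSpace ℝ (Fin m))
    (hg : g = A b) (hr : r = H d + g) (hres : ‖r‖ ≤ τ * μ * ‖d‖)
    (q : EuclideanSpace ℝ (Fin m) → ℝ)
    (hq : ∀ u, q u = (1 / 2) * ‖(ContinuousLinearMap.adjoint A) u + b‖ ^ 2) :
    q 0 - q d ≥ ‖r - g‖ ^ 2 / (2 * (L₀ ^ 2 + μ)) := by
  change H = regularizedGram A μ at hH
  subst hH hg hr
  have hrd : ⟪regularizedGram A μ d + A b, d⟫_ℝ ≤ μ / 2 * ‖d‖ ^ 2 := by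
    refine (real_inner_le_of_norm_le_mul_norm hres).trans ?_
    gcongr
    nlinarith [hτ.2]
  have hdecrease := inner_regularizedGram_le_model_decrease d b hrd
  have hnorm := sq_norm_regularizedGram_apply_le d hA hμ.le
  have hden : 0 < L₀ ^ 2 + μ := by positivity
  rw [hq, hq, map_zero, zero_add, add_sub_cancel_right, ge_iff_le, div_le_iff₀ (by positivity)]
  linarith [mul_le_mul_of_nonneg_left hdecrease hden.le]
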